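/- The canonical projection π : D_H → H defined by π(f ⊗ x) = x(1) f is a bialgebra homomorphism: π is a unital algebra homomorphism from the tensor product algebra D_H = H ⊗ H* to H, and it satisfies (π ⊗ π) ∘ Δ_D = Δ ∘ π and ε ∘ π = ε_D. -/

import Mathlib

/-!
Evaluation at `1` is a character of the convolution algebra `H*` (because `Δ(1) = 1 ⊗ 1`),
and `π = id ⊗ ev₁`, so `π` is multiplicative and unital. Since `π(w) = Σ_j e^j(1) e_j = 1`
and `π(w⁻¹) = S(1) = 1`, the conjugation `Ad(w)` is invisible after `π`; what remains of
`(π ⊗ π) Δ_D (f ⊗ x)` is `Δ̂(x)(1 ⊗ 1) Δ(f) = x(1) Δ(f)`.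
-/

open scoped TensorProduct

noncomputable section

variable (k H : Type*) [Field k] [Ring H] [HopfAlgebra k H]

/-- The convolution product on the linear dual `H*` of `H`, as a linear map
`H* ⊗ H* → H*`: it sends `x ⊗ y` to `a ↦ x(a_(1)) y(a_(2))`. -/
def convL : Module.Dual k H ⊗[k] Module.Dual k H →ₗ[k] Module.Dual k H :=
  LinearMap.lcomp k k (Coalgebra.comul (R := k) (A := H)) ∘ₗ
    TensorProduct.dualDistrib k H H

/-- The multiplication of the tensor product algebra `D_H = H ⊗ H*`, where `H*` carries
the convolution product: `(f ⊗ x)(g ⊗ y) = fg ⊗ (x · y)`. -/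
def mulD : (H ⊗[k] Module.Dual k H) ⊗[k] (H ⊗[k] Module.Dual k H) →ₗ[k]
    H ⊗[k] Module.Dual k H :=
  TensorProduct.map (LinearMap.mul' k H) (convL k H) ∘ₗ
    (TensorProduct.tensorTensorTensorComm k H (Module.Dual k H) H
      (Module.Dual k H)).toLinearMap

/-- The unit `1 ⊗ ε` of the tensor product algebra `D_H = H ⊗ H*`. -/
def oneD : H ⊗[k] Module.Dual k H :=
  (1 : H) ⊗ₜ[k] (Coalgebra.counit (R := k) (A := H))

/-- The counit `ε_D(f ⊗ x) = ε(f) x(1)` of the Drinfeld codouble `D_H = H ⊗ H*`. -/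
def epsD : H ⊗[k] Module.Dual k H →ₗ[k] k :=
  LinearMap.mul' k k ∘ₗ
    TensorProduct.map (Coalgebra.counit (R := k) (A := H))
      (LinearMap.applyₗ (1 : H) : Module.Dual k H →ₗ[k] k)

variable {k H}

/-- The element `w = Σ_j e_j ⊗ e^j ∈ H ⊗ H*`. -/
def wElem {n : ℕ} (b : Module.Basis (Fin n) k H) : H ⊗[k] Module.Dual k H :=
  ∑ j : Fin n, b j ⊗ₜ[k] b.coord j

/-- The element `w⁻¹ = (S ⊗ id)(w) = Σ_j S(e_j) ⊗ e^j ∈ H ⊗ H*`. -/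
def wElemInv {n : ℕ} (b : Module.Basis (Fin n) k H) : H ⊗[k] Module.Dual k H :=
  ∑ j : Fin n, HopfAlgebra.antipode (R := k) (b j) ⊗ₜ[k] b.coord j

/-- Conjugation `Ad(w)(z) = w z w⁻¹` by `w` in the tensor product algebra `H ⊗ H*`. -/
def adW {n : ℕ} (b : Module.Basis (Fin n) k H) :
    H ⊗[k] Module.Dual k H →ₗ[k] H ⊗[k] Module.Dual k H :=
  mulD k H ∘ₗ
    TensorProduct.mk k (H ⊗[k] Module.Dual k H) (H ⊗[k] Module.Dual k H) (wElem b) ∘ₗ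
    mulD k H ∘ₗ
    (TensorProduct.mk k (H ⊗[k] Module.Dual k H) (H ⊗[k] Module.Dual k H)).flip
      (wElemInv b)

/-- The comultiplication `Δ_D = (id ⊗ σ ⊗ id) ∘ (id ⊗ Ad(w) ⊗ id) ∘ (Δ ⊗ Δ̂)` of the
Drinfeld codouble `D_H = H ⊗ H*`, where `Δ̂` is the comultiplication of `(H*)^cop` and
`σ` is the flip map. -/
def deltaD {n : ℕ} (b : Module.Basis (Fin n) k H)
    (Δhat : Module.Dual k H →ₗ[k] Module.Dual k H ⊗[k] Module.Dual k H) :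
    H ⊗[k] Module.Dual k H →ₗ[k]
      (H ⊗[k] Module.Dual k H) ⊗[k] (H ⊗[k] Module.Dual k H) :=
  (TensorProduct.assoc k H (Module.Dual k H) (H ⊗[k] Module.Dual k H)).symm.toLinearMap ∘ₗ
    TensorProduct.map (LinearMap.id : H →ₗ[k] H)
      (TensorProduct.assoc k (Module.Dual k H) H (Module.Dual k H)).toLinearMap ∘ₗ
    TensorProduct.map (LinearMap.id : H →ₗ[k] H)
      (TensorProduct.map (TensorProduct.comm k H (Module.Dual k H)).toLinearMap
        (LinearMap.id : Module.Dual k H →ₗ[k] Module.Dual k H)) ∘ₗ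
    TensorProduct.map (LinearMap.id : H →ₗ[k] H)
      (TensorProduct.map (adW b)
        (LinearMap.id : Module.Dual k H →ₗ[k] Module.Dual k H)) ∘ₗ
    TensorProduct.map (LinearMap.id : H →ₗ[k] H)
      (TensorProduct.assoc k H (Module.Dual k H) (Module.Dual k H)).symm.toLinearMap ∘ₗ
    (TensorProduct.assoc k H H (Module.Dual k H ⊗[k] Module.Dual k H)).toLinearMap ∘ₗ
    TensorProduct.map (Coalgebra.comul (R := k) (A := H)) Δhat

variable (k H)

/-- The canonical projection `π : D_H → H`, `π(f ⊗ x) = x(1) f`. -/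
def piD : H ⊗[k] Module.Dual k H →ₗ[k] H :=
  (TensorProduct.rid k H).toLinearMap ∘ₗ
    TensorProduct.map (LinearMap.id : H →ₗ[k] H)
      (LinearMap.applyₗ (1 : H) : Module.Dual k H →ₗ[k] k)

section Projection

open TensorProduct

variable {k H}

lemma piD_tmul (f : H) (x : Module.Dual k H) : piD k H (f ⊗ₜ[k] x) = x 1 • f := by
  simp [piD]

lemma convL_tmul_apply_one (x y : Module.Dual k H) :
    convL k H (x ⊗ₜ[k] y) 1 = x 1 * y 1 := by
  simp [convL, Algebra.TensorProduct.one_def]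

lemma mulD_tmul (f g : H) (x y : Module.Dual k H) :
    mulD k H ((f ⊗ₜ[k] x) ⊗ₜ[k] (g ⊗ₜ[k] y)) = (f * g) ⊗ₜ[k] convL k H (x ⊗ₜ[k] y) := by
  simp [mulD]

lemma piD_mulD (z z' : H ⊗[k] Module.Dual k H) :
    piD k H (mulD k H (z ⊗ₜ[k] z')) = piD k H z * piD k H z' := by
  induction z using TensorProduct.induction_on with
  | zero => simp
  | add u v hu hv => simp only [add_tmul, map_add, hu, hv, add_mul]
  | tmul f x =>
    induction z' using TensorProduct.induction_on with
    | zero => simp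
    | add u v hu hv => simp only [tmul_add, map_add, hu, hv, mul_add]
    | tmul g y =>
      rw [mulD_tmul, piD_tmul, piD_tmul, piD_tmul, convL_tmul_apply_one,
        smul_mul_assoc, mul_smul_comm, smul_smul]

lemma piD_oneD : piD k H (oneD k H) = 1 := by
  simp [oneD, piD_tmul]

lemma piD_wElem {n : ℕ} (b : Module.Basis (Fin n) k H) : piD k H (wElem b) = 1 := by
  simp only [wElem, map_sum, piD_tmul, Module.Basis.coord_apply]
  exact b.sum_repr 1

lemma piD_wElemInv {n : ℕ} (b : Module.Basis (Fin n) k H) : piD k H (wElemInv b) = 1 := by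
  simp only [wElemInv, map_sum, piD_tmul, Module.Basis.coord_apply, ← map_smul]
  rw [← map_sum, b.sum_repr 1, HopfAlgebra.antipode_one]

lemma piD_adW {n : ℕ} (b : Module.Basis (Fin n) k H) (z : H ⊗[k] Module.Dual k H) :
    piD k H (adW b z) = piD k H z := by
  simp only [adW, LinearMap.comp_apply, LinearMap.flip_apply, mk_apply]
  rw [piD_mulD, piD_mulD, piD_wElem, piD_wElemInv, one_mul, mul_one]

lemma map_piD_assoc_comm_tmul (f : H) (x : Module.Dual k H) (z : H ⊗[k] Module.Dual k H) :
    map (piD k H) (piD k H)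
      ((TensorProduct.assoc k H (Module.Dual k H) (H ⊗[k] Module.Dual k H)).symm
        (f ⊗ₜ[k] TensorProduct.assoc k (Module.Dual k H) H (Module.Dual k H)
          (TensorProduct.comm k H (Module.Dual k H) z ⊗ₜ[k] x)))
      = x 1 • (f ⊗ₜ[k] piD k H z) := by
  induction z using TensorProduct.induction_on with
  | zero => simp
  | add u v hu hv => simp only [add_tmul, tmul_add, map_add, hu, hv, smul_add]
  | tmul g y => simp [piD_tmul, smul_tmul, tmul_smul, smul_smul]

lemma map_piD_deltaD_tmul {n : ℕ} (b : Module.Basis (Fin n) k H)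
    (Δhat : Module.Dual k H →ₗ[k] Module.Dual k H ⊗[k] Module.Dual k H)
    (f : H) (x : Module.Dual k H) :
    map (piD k H) (piD k H) (deltaD b Δhat (f ⊗ₜ[k] x))
      = dualDistrib k H H (Δhat x) (1 ⊗ₜ[k] 1) • Coalgebra.comul (R := k) f := by
  simp only [deltaD, LinearMap.comp_apply, map_tmul, LinearEquiv.coe_coe]
  generalize Coalgebra.comul (R := k) f = u
  generalize Δhat x = v
  induction u using TensorProduct.induction_on with
  | zero => simp
  | add u₁ u₂ h₁ h₂ => simp only [add_tmul, map_add, h₁, h₂, smul_add]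
  | tmul f₁ f₂ =>
    induction v using TensorProduct.induction_on with
    | zero => simp
    | add v₁ v₂ h₁ h₂ => simp only [tmul_add, map_add, h₁, h₂, LinearMap.add_apply, add_smul]
    | tmul x₁ x₂ =>
      simp only [assoc_tmul, assoc_symm_tmul, map_tmul, LinearMap.id_apply, LinearEquiv.coe_coe]
      rw [map_piD_assoc_comm_tmul, piD_adW, piD_tmul, dualDistrib_apply, tmul_smul, smul_smul,
        mul_comm]

lemma counit_comp_piD : Coalgebra.counit (R := k) (A := H) ∘ₗ piD k H = epsD k H := by
  ext f x
  simp [piD_tmul, epsD, mul_comm]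

end Projection

/-- The canonical projection `π : D_H → H`, `π(f ⊗ x) = x(1) f`, is a
bialgebra homomorphism: it is a unital algebra homomorphism from the tensor product
algebra `D_H = H ⊗ H*` to `H` and satisfies `(π ⊗ π) ∘ Δ_D = Δ ∘ π` and `ε ∘ π = ε_D`.
Here `Δ̂` is the comultiplication of `(H*)^cop`, characterized by `Δ̂(x)(a ⊗ b) = x(ba)`. -/
theorem drinfeld_codouble_projection_first_factor
    {k H : Type*} [Field k] [Ring H] [HopfAlgebra k H] {n : ℕ} (b : Module.Basis (Fin n) k H)
    (Δhat : Module.Dual k H →ₗ[k] Module.Dual k H ⊗[k] Module.Dual k H)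
    (hΔhat : ∀ (x : Module.Dual k H) (a c : H),
      TensorProduct.dualDistrib k H H (Δhat x) (a ⊗ₜ[k] c) = x (c * a)) :
    (∀ z z' : H ⊗[k] Module.Dual k H,
      piD k H (mulD k H (z ⊗ₜ[k] z')) = piD k H z * piD k H z') ∧
    (piD k H (oneD k H) = 1) ∧
    (TensorProduct.map (piD k H) (piD k H) ∘ₗ deltaD b Δhat
      = Coalgebra.comul (R := k) (A := H) ∘ₗ piD k H) ∧
    (Coalgebra.counit (R := k) (A := H) ∘ₗ piD k H = epsD k H) := by
  refine ⟨piD_mulD, piD_oneD, TensorProduct.ext' fun f x => ?_, counit_comp_piD⟩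
  rw [LinearMap.comp_apply, LinearMap.comp_apply, map_piD_deltaD_tmul, hΔhat, mul_one,
    piD_tmul, map_smul]

end
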